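/- In any interleaving, for each pid p occurring in an event, either p is the initial pid or there is exactly one event spawning p, and it precedes all events of p. -/

import Mathlib

/-- Actions of a message-passing concurrent language with dynamic
process spawning and selective receives. -/
inductive MAction (Pid Tag Val Cstr : Type) : Type where
  | spawn (p : Pid)
  | send (t : Tag) (v : Val) (p : Pid)
  | receive (t : Tag) (cs : Cstr)

/-- An event `p : a` consists of a pid and an action. -/
structure MEvent (Pid Tag Val Cstr : Type) : Type where
  pid : Pid
  act : MAction Pid Tag Val Cstr

variable {Pid Tag Val Cstr : Type}

/-- Direct (base) dependency between two events: same pid, spawn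
dependency, or send/receive dependency on the same message tag. -/
def EvDep (e e' : MEvent Pid Tag Val Cstr) : Prop :=
  e.pid = e'.pid ∨ e.act = MAction.spawn e'.pid ∨
    ∃ t v cs, e.act = MAction.send t v e'.pid ∧ e'.act = MAction.receive t cs

/-- Two events are independent if neither directly depends on the other. -/
def Indep (e e' : MEvent Pid Tag Val Cstr) : Prop := ¬ EvDep e e' ∧ ¬ EvDep e' e

/-- Base happened-before relation on positions of a sequence of events. -/
def hbBase (S : List (MEvent Pid Tag Val Cstr)) (i j : ℕ) : Prop :=
  i < j ∧ ∃ ei ej, S.get?Internal i = some ei ∧ S.get?Internal j = some ej ∧ EvDep ei ej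

/-- The happened-before relation `⇝_S` on positions: the transitive
closure of the base relation. -/
def hb (S : List (MEvent Pid Tag Val Cstr)) : ℕ → ℕ → Prop :=
  Relation.TransGen (hbBase S)

/-- The happened-before relation on events (rather than positions). -/
def hbE (S : List (MEvent Pid Tag Val Cstr)) (e e' : MEvent Pid Tag Val Cstr) : Prop :=
  ∃ i j, S.get?Internal i = some e ∧ S.get?Internal j = some e' ∧ hb S i j

/-- A single swap of two consecutive independent events. -/
def Swap (S S' : List (MEvent Pid Tag Val Cstr)) : Prop :=
  ∃ (L₁ L₂ : List (MEvent Pid Tag Val Cstr)) (e e' : MEvent Pid Tag Val Cstr),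
    Indep e e' ∧ S = L₁ ++ e :: e' :: L₂ ∧ S' = L₁ ++ e' :: e :: L₂

/-- Causal equivalence `S ≈ S'`: a finite number of swaps of consecutive
independent events (note that `Swap` is symmetric). -/
def CausalEq (S S' : List (MEvent Pid Tag Val Cstr)) : Prop :=
  Relation.ReflTransGen Swap S S'

/-- Well-formedness conditions of an interleaving with initial pid `p1`,
parameterized by the matching function `mtch` on values and constraints. -/
def IsInterleaving (mtch : Val → Cstr → Bool) (p1 : Pid)
    (S : List (MEvent Pid Tag Val Cstr)) : Prop :=
  -- (1) every event of a non-initial pid is preceded by its spawn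
  (∀ j ej, S.get?Internal j = some ej → ej.pid = p1 ∨
     ∃ i ei, i < j ∧ S.get?Internal i = some ei ∧ ei.pid ≠ ej.pid ∧
       ei.act = MAction.spawn ej.pid) ∧
  -- (2) every receive is preceded by a matching send
  (∀ j ej t cs, S.get?Internal j = some ej → ej.act = MAction.receive t cs →
     ∃ i ei v, i < j ∧ S.get?Internal i = some ei ∧
       ei.act = MAction.send t v ej.pid ∧ mtch v cs = true) ∧
  -- (3) FIFO with matching between each pair of processes
  (∀ i j ei ej t v cs, S.get?Internal i = some ei → S.get?Internal j = some ej →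
     ei.act = MAction.send t v ej.pid → ej.act = MAction.receive t cs →
     ∀ i' ei' t' v', i' < i → S.get?Internal i' = some ei' → ei'.pid = ei.pid →
       ei'.act = MAction.send t' v' ej.pid →
       mtch v' cs = false ∨ ∃ j' ej' cs', j' < j ∧ S.get?Internal j' = some ej' ∧
         ej'.pid = ej.pid ∧ ej'.act = MAction.receive t' cs') ∧
  -- (4) uniqueness of pids (spawn arguments) and message tags
  ((∀ i j ei ej q, S.get?Internal i = some ei → S.get?Internal j = some ej →
     ei.act = MAction.spawn q → ej.act = MAction.spawn q → i = j) ∧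
   (∀ i j ei ej t v q v' q', S.get?Internal i = some ei → S.get?Internal j = some ej →
     ei.act = MAction.send t v q → ej.act = MAction.send t v' q' → i = j))

/-- The sequence of actions of process `p` in `S`, in order. -/
def actions [DecidableEq Pid] (p : Pid) (S : List (MEvent Pid Tag Val Cstr)) :
    List (MAction Pid Tag Val Cstr) :=
  (S.filter (fun e => decide (e.pid = p))).map MEvent.act

/-- The trace of an interleaving: the mapping from each pid to its
sequence of actions. -/
def tr [DecidableEq Pid] (S : List (MEvent Pid Tag Val Cstr)) :
    Pid → List (MAction Pid Tag Val Cstr) :=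
  fun p => actions p S

/-- `S` is a linearization of the trace `τ` (with initial pid `p1`). -/
def InSched [DecidableEq Pid] (mtch : Val → Cstr → Bool) (p1 : Pid)
    (τ : Pid → List (MAction Pid Tag Val Cstr))
    (S : List (MEvent Pid Tag Val Cstr)) : Prop :=
  IsInterleaving mtch p1 S ∧ tr S = τ

/-- A trace is a mapping coming from some interleaving. -/
def IsTrace [DecidableEq Pid] (mtch : Val → Cstr → Bool) (p1 : Pid)
    (τ : Pid → List (MAction Pid Tag Val Cstr)) : Prop :=
  ∃ S, InSched mtch p1 τ S

/-- Subtrace relation: `τ' ≪ τ` iff each `τ' p` is a prefix of `τ p`. -/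
def Subtrace (τ' τ : Pid → List (MAction Pid Tag Val Cstr)) : Prop :=
  ∀ p, τ' p <+: τ p

/-- Base happened-before relation on trace events, identified by a pid
and a position in the action sequence of that pid. -/
def hbTBase (τ : Pid → List (MAction Pid Tag Val Cstr)) :
    Pid × ℕ → Pid × ℕ → Prop := fun x y =>
  (x.1 = y.1 ∧ x.2 < y.2) ∨
  ((τ x.1).get?Internal x.2 = some (MAction.spawn y.1)) ∨
  (∃ t v cs, (τ x.1).get?Internal x.2 = some (MAction.send t v y.1) ∧
     (τ y.1).get?Internal y.2 = some (MAction.receive t cs))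

/-- Happened-before relation `⇝_τ` induced by a trace. -/
def hbT (τ : Pid → List (MAction Pid Tag Val Cstr)) :
    Pid × ℕ → Pid × ℕ → Prop :=
  Relation.TransGen (hbTBase τ)

/-- `ℓ'` races with the message `ℓ` received by the `j`-th action of
process `p` (a receive with constraint `cs`), via the `i`-th action of
the sender `p'`. -/
def InRaceSetVia (mtch : Val → Cstr → Bool)
    (τ : Pid → List (MAction Pid Tag Val Cstr)) (p : Pid) (j : ℕ)
    (t : Tag) (cs : Cstr) (p' : Pid) (i : ℕ) (t' : Tag) : Prop :=
  t' ≠ t ∧ ∃ v', (τ p').get?Internal i = some (MAction.send t' v' p) ∧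
    mtch v' cs = true ∧ ¬ hbT τ (p, j) (p', i) ∧
    ∀ i' t'' v'', i' < i → (τ p').get?Internal i' = some (MAction.send t'' v'' p) →
      mtch v'' cs = false ∨
        ∃ j' cs'', j' < j ∧ (τ p).get?Internal j' = some (MAction.receive t'' cs'')

/-- `t' ∈ race_set_τ(t)` for the receive at position `j` of process `p`. -/
def InRaceSet (mtch : Val → Cstr → Bool)
    (τ : Pid → List (MAction Pid Tag Val Cstr)) (p : Pid) (j : ℕ)
    (t : Tag) (cs : Cstr) (t' : Tag) : Prop :=
  ∃ p' i, InRaceSetVia mtch τ p j t cs p' i t'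

/-- The function `rdep`, removing the actions that causally depend on a
given sequence of actions, given as an inductive relation mirroring its
defining equations. -/
inductive RDep [DecidableEq Pid] :
    List (MAction Pid Tag Val Cstr) →
    (Pid → List (MAction Pid Tag Val Cstr)) →
    (Pid → List (MAction Pid Tag Val Cstr)) → Prop where
  | nil (τ : Pid → List (MAction Pid Tag Val Cstr)) : RDep [] τ τ
  | rcv (t : Tag) (cs : Cstr) (A' : List (MAction Pid Tag Val Cstr)) (τ τ' :
      Pid → List (MAction Pid Tag Val Cstr)) :
      RDep A' τ τ' → RDep (MAction.receive t cs :: A') τ τ'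
  | spwn (p : Pid) (A' : List (MAction Pid Tag Val Cstr)) (τ τ' :
      Pid → List (MAction Pid Tag Val Cstr)) :
      RDep (A' ++ τ p) (Function.update τ p []) τ' →
      RDep (MAction.spawn p :: A') τ τ'
  | send_rec (t : Tag) (v : Val) (p : Pid) (cs : Cstr)
      (A' A'' Astar : List (MAction Pid Tag Val Cstr))
      (τ τ' : Pid → List (MAction Pid Tag Val Cstr)) :
      τ p = A'' ++ MAction.receive t cs :: Astar →
      RDep (A' ++ Astar) (Function.update τ p A'') τ' →
      RDep (MAction.send t v p :: A') τ τ'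
  | send_norec (t : Tag) (v : Val) (p : Pid)
      (A' : List (MAction Pid Tag Val Cstr))
      (τ τ' : Pid → List (MAction Pid Tag Val Cstr)) :
      (∀ cs, MAction.receive t cs ∉ τ p) → RDep A' τ τ' →
      RDep (MAction.send t v p :: A') τ τ'

def SpawnsAt (S : List (MEvent Pid Tag Val Cstr)) (q : Pid) (i : ℕ) : Prop :=
  ∃ ei, S.get?Internal i = some ei ∧ ei.act = MAction.spawn q

namespace IsInterleaving

variable {mtch : Val → Cstr → Bool} {p1 : Pid} {S : List (MEvent Pid Tag Val Cstr)}

theorem exists_spawnsAt_lt (h : IsInterleaving mtch p1 S) {k : ℕ} {ek : MEvent Pid Tag Val Cstr}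
    (hk : S.get?Internal k = some ek) (hp : ek.pid ≠ p1) : ∃ i < k, SpawnsAt S ek.pid i := by
  obtain hp' | ⟨i, ei, hik, hi, -, hspawn⟩ := h.1 k ek hk
  · exact absurd hp' hp
  · exact ⟨i, hik, ei, hi, hspawn⟩

theorem eq_of_spawnsAt (h : IsInterleaving mtch p1 S) {q : Pid} {i i' : ℕ}
    (hi : SpawnsAt S q i) (hi' : SpawnsAt S q i') : i = i' := by
  obtain ⟨ei, hi, hspawn⟩ := hi
  obtain ⟨ei', hi', hspawn'⟩ := hi'
  exact h.2.2.2.1 i i' ei ei' q hi hi' hspawn hspawn'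

theorem existsUnique_spawnsAt (h : IsInterleaving mtch p1 S) {k : ℕ}
    {ek : MEvent Pid Tag Val Cstr} (hk : S.get?Internal k = some ek) (hp : ek.pid ≠ p1) :
    ∃! i, SpawnsAt S ek.pid i :=
  let ⟨i, _, hi⟩ := h.exists_spawnsAt_lt hk hp
  ⟨i, hi, fun _ hi' => h.eq_of_spawnsAt hi' hi⟩

theorem spawnsAt_lt (h : IsInterleaving mtch p1 S) {q : Pid} {i k : ℕ}
    {ek : MEvent Pid Tag Val Cstr} (hi : SpawnsAt S q i) (hk : S.get?Internal k = some ek)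
    (hkq : ek.pid = q) (hq : q ≠ p1) : i < k := by
  subst hkq
  obtain ⟨i', hi'k, hi'⟩ := h.exists_spawnsAt_lt hk hq
  exact h.eq_of_spawnsAt hi hi' ▸ hi'k

end IsInterleaving

/-- in an interleaving, for each pid occurring in an event,
either it is the initial pid or there is exactly one event spawning it,
and this event precedes all events of that pid. -/
theorem unique_spawn (mtch : Val → Cstr → Bool) (p1 : Pid)
    (S : List (MEvent Pid Tag Val Cstr))
    (h : IsInterleaving mtch p1 S)
    (j : ℕ) (ej : MEvent Pid Tag Val Cstr) (hj : S.get?Internal j = some ej) :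
    ej.pid = p1 ∨
      ((∃! i : ℕ, ∃ ei, S.get?Internal i = some ei ∧ ei.act = MAction.spawn ej.pid) ∧
       (∀ i ei, S.get?Internal i = some ei → ei.act = MAction.spawn ej.pid →
         ∀ k ek, S.get?Internal k = some ek → ek.pid = ej.pid → i < k)) := by
  by_cases hp : ej.pid = p1
  · exact Or.inl hp
  refine Or.inr ⟨h.existsUnique_spawnsAt hj hp, ?_⟩
  intro i ei hi hspawn k ek hk hkp
  exact h.spawnsAt_lt ⟨ei, hi, hspawn⟩ hk hkp hp
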